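/- arXiv:1510.02808 — 2 statements merged into one kernel-verified Lean document; each statement's English description precedes it below -/
import Mathlib

section
/- Suppose the market weight sequence {μ(t)} ⊂ Δ_n satisfies Assumption (M). Then for each t ≥ 0 there exists a functionally generated portfolio π* ∈ FG such that V_{π*}(t) = sup_{π ∈ FG} V_π(t); i.e., the supremum of the relative value over the family of all functionally generated portfolios is attained. -/
open MeasureTheory Filter Topology Finset

noncomputable section

/-- The open unit simplex in `ℝⁿ`. -/
def oS (n : ℕ) : Set (Fin n → ℝ) := {p | (∀ i, 0 < p i) ∧ ∑ i, p i = 1}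

/-- The closed unit simplex in `ℝⁿ`. -/
def cS (n : ℕ) : Set (Fin n → ℝ) := {p | (∀ i, 0 ≤ p i) ∧ ∑ i, p i = 1}

/-- Relative value of a (time-dependent) weight sequence `w` along market path `μ`. -/
def relV {n : ℕ} (μ w : ℕ → Fin n → ℝ) : ℕ → ℝ
  | 0 => 1
  | t + 1 => relV μ w t * ∑ i, w t i * (μ (t + 1) i / μ t i)

/-- Relative value of a portfolio map. -/
def pV {n : ℕ} (μ : ℕ → ↥(oS n)) (π : ↥(oS n) → ↥(cS n)) : ℕ → ℝ :=
  relV (fun t => (μ t : Fin n → ℝ)) (fun t => (π (μ t) : Fin n → ℝ))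

/-- Assumption (M): relative returns bounded between `1/M` and `M`. -/
def AssumptionM {n : ℕ} (M : ℝ) (μ : ℕ → ↥(oS n)) : Prop :=
  ∀ t i, 1 / M ≤ (μ (t + 1) : Fin n → ℝ) i / (μ t : Fin n → ℝ) i ∧
    (μ (t + 1) : Fin n → ℝ) i / (μ t : Fin n → ℝ) i ≤ M

/-- A functionally generated portfolio map. -/
def IsFG {n : ℕ} (π : ↥(oS n) → ↥(cS n)) : Prop :=
  ∃ Φ : (Fin n → ℝ) → ℝ, (∀ p ∈ oS n, 0 < Φ p) ∧ ConcaveOn ℝ (oS n) Φ ∧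
    ∀ p q : ↥(oS n),
      Φ (q : Fin n → ℝ) / Φ (p : Fin n → ℝ) ≤
        ∑ i, (π p : Fin n → ℝ) i * ((q : Fin n → ℝ) i / (p : Fin n → ℝ) i)

/-!
Only the weights a portfolio holds at the points `μ 0, …, μ t` enter `V(t)`. Weights `w_s` at
finitely many points `p_s` are those of a functionally generated portfolio iff there are positive
`c_s` (the values of the generating function) with `c_{s'} ≤ c_s ∑ᵢ w_{s,i} p_{s',i} / p_{s,i}`:
conversely `Φ(q) = min_s c_s ∑ᵢ w_{s,i} q_i / p_{s,i}` is a minimum of linear functions, and the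
portfolio holds the drifted weights of a minimising `s`. Normalising one `c_s` to `1` makes the set
of such pairs `(w, c)` compact, and `V(t)` is continuous in `w`, so the supremum is attained.
-/

theorem concaveOn_finset_inf' {ι E : Type*} [AddCommGroup E] [Module ℝ E] {S : Set E}
    {s : Finset ι} (hs : s.Nonempty) {f : ι → E → ℝ} (hS : Convex ℝ S)
    (hf : ∀ i ∈ s, ConcaveOn ℝ S (f i)) :
    ConcaveOn ℝ S fun x => s.inf' hs fun i => f i x := by
  refine ⟨hS, fun x hx y hy a b ha hb hab => Finset.le_inf' _ _ fun i hi => ?_⟩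
  calc a • s.inf' hs (fun i => f i x) + b • s.inf' hs (fun i => f i y)
      ≤ a • f i x + b • f i y := by gcongr <;> exact Finset.inf'_le _ hi
    _ ≤ f i (a • x + b • y) := (hf i hi).2 hx hy ha hb hab

section

variable {n : ℕ}

theorem oS_subset_cS : oS n ⊆ cS n := fun _ hp => ⟨fun i => (hp.1 i).le, hp.2⟩

theorem convex_oS : Convex ℝ (oS n) := by
  have h : oS n = Set.univ.pi (fun _ => Set.Ioi 0) ∩ stdSimplex ℝ (Fin n) := by
    ext p
    simp only [oS, stdSimplex, Set.mem_ofPred_eq, Set.mem_inter_iff, Set.mem_pi, Set.mem_univ,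
      true_implies, Set.mem_Ioi]
    exact ⟨fun h => ⟨h.1, fun i => (h.1 i).le, h.2⟩, fun h => ⟨h.1, h.2.2⟩⟩
  rw [h]
  exact (convex_pi fun _ _ => convex_Ioi 0).inter (convex_stdSimplex ℝ (Fin n))

def growth (w x y : Fin n → ℝ) : ℝ := ∑ i, w i * (y i / x i)

theorem growth_market {x : Fin n → ℝ} (hx : ∀ i, x i ≠ 0) (y : Fin n → ℝ) :
    growth x x y = ∑ i, y i := by
  simp only [growth, mul_div_cancel₀ _ (hx _)]

theorem growth_self {w x : Fin n → ℝ} (hw : w ∈ cS n) (hx : ∀ i, x i ≠ 0) :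
    growth w x x = 1 := by
  simp only [growth, div_self (hx _), mul_one, hw.2]

theorem growth_nonneg {w x y : Fin n → ℝ} (hw : w ∈ cS n) (hx : ∀ i, 0 ≤ x i)
    (hy : ∀ i, 0 ≤ y i) : 0 ≤ growth w x y :=
  Finset.sum_nonneg fun i _ => mul_nonneg (hw.1 i) (div_nonneg (hy i) (hx i))

theorem growth_pos {w x y : Fin n → ℝ} (hw : w ∈ cS n) (hx : ∀ i, 0 < x i)
    (hy : ∀ i, 0 < y i) : 0 < growth w x y := by
  obtain ⟨i, -, hi⟩ : ∃ i ∈ Finset.univ, (0 : ℝ) < w i :=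
    Finset.exists_lt_of_sum_lt (by simp [hw.2])
  exact Finset.sum_pos' (fun j _ => mul_nonneg (hw.1 j) (div_nonneg (hy j).le (hx j).le))
    ⟨i, Finset.mem_univ i, mul_pos hi (div_pos (hy i) (hx i))⟩

theorem growth_le_sum_div {w x y : Fin n → ℝ} (hw : w ∈ cS n) (hx : ∀ i, 0 ≤ x i)
    (hy : ∀ i, 0 ≤ y i) : growth w x y ≤ ∑ i, y i / x i :=
  Finset.sum_le_sum fun i _ => mul_le_of_le_one_left (div_nonneg (hy i) (hx i))
    (mem_Icc_of_mem_stdSimplex hw i).2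

theorem continuous_growth (x y : Fin n → ℝ) :
    Continuous fun w : Fin n → ℝ => growth w x y := by
  unfold growth
  fun_prop

theorem concaveOn_growth (c : ℝ) (w x : Fin n → ℝ) :
    ConcaveOn ℝ (oS n) fun y => c * growth w x y := by
  refine ⟨convex_oS, fun y _ z _ a b _ _ _ => le_of_eq ?_⟩
  simp only [growth, Pi.add_apply, Pi.smul_apply, smul_eq_mul, Finset.mul_sum,
    ← Finset.sum_add_distrib]
  exact Finset.sum_congr rfl fun i _ => by ring

/-- The weights `w`, held without rebalancing while the market moves from `x` to `q`. -/
def drift (w x q : Fin n → ℝ) : Fin n → ℝ := fun i => w i * (q i / x i) / growth w x q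

theorem drift_mem_cS {w x q : Fin n → ℝ} (hw : w ∈ cS n) (hx : ∀ i, 0 < x i)
    (hq : ∀ i, 0 < q i) : drift w x q ∈ cS n := by
  have hg := growth_pos hw hx hq
  refine ⟨fun i => div_nonneg (mul_nonneg (hw.1 i) (div_nonneg (hq i).le (hx i).le)) hg.le, ?_⟩
  simp only [drift, ← Finset.sum_div]
  exact div_self hg.ne'

theorem drift_self {w x : Fin n → ℝ} (hw : w ∈ cS n) (hx : ∀ i, x i ≠ 0) :
    drift w x x = w := by
  funext i
  simp [drift, growth_self hw hx, hx i]

theorem growth_drift {w x q : Fin n → ℝ} (hq : ∀ i, q i ≠ 0) (y : Fin n → ℝ) :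
    growth (drift w x q) q y = growth w x y / growth w x q := by
  simp only [growth, drift, Finset.sum_div]
  refine Finset.sum_congr rfl fun i _ => ?_
  field_simp [hq i]

variable {ι : Type*} {p : ι → oS n} {w : ι → Fin n → ℝ} {c : ι → ℝ}

/-- `c s` plays the role of `Φ (p s)`: the defining inequality of `IsFG` is imposed only between
the points `p s`, where the portfolio holds `w s`. -/
def IsFGCertificate (p : ι → oS n) (w : ι → Fin n → ℝ) (c : ι → ℝ) : Prop :=
  (∀ s, w s ∈ cS n) ∧ (∀ s s', c s' ≤ c s * growth (w s) (p s) (p s')) ∧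
    ∀ s s', p s = p s' → w s = w s'

theorem isFGCertificate_market (p : ι → oS n) :
    IsFGCertificate p (fun s => p s) 1 := by
  refine ⟨fun s => oS_subset_cS (p s).2, fun s s' => ?_, fun s s' h => congrArg Subtype.val h⟩
  simp [growth_market fun i => ((p s).2.1 i).ne', (p s').2.2]

theorem IsFG.isFGCertificate {π : oS n → cS n} (hπ : IsFG π) (p : ι → oS n) :
    ∃ c, IsFGCertificate p (fun s => π (p s)) c ∧ ∀ s, 0 < c s := by
  obtain ⟨Φ, hΦ, -, hπΦ⟩ := hπ
  refine ⟨fun s => Φ (p s),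
    ⟨fun s => (π (p s)).2, fun s s' => ?_, fun s s' h => by simp only [h]⟩, fun s => hΦ _ (p s).2⟩
  rw [← div_le_iff₀' (hΦ _ (p s).2)]
  exact hπΦ (p s) (p s')

theorem IsFGCertificate.smul (h : IsFGCertificate p w c) {a : ℝ} (ha : 0 ≤ a) :
    IsFGCertificate p w (a • c) := by
  refine ⟨h.1, fun s s' => ?_, h.2.2⟩
  simpa only [Pi.smul_apply, smul_eq_mul, mul_assoc] using
    mul_le_mul_of_nonneg_left (h.2.1 s s') ha

theorem IsFGCertificate.pos (h : IsFGCertificate p w c) {s₀ : ι} (hs₀ : c s₀ = 1) (s : ι) :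
    0 < c s := by
  have hle := h.2.1 s s₀
  rw [hs₀] at hle
  exact pos_of_mul_pos_left (one_pos.trans_le hle)
    (growth_nonneg (h.1 s) (fun i => ((p s).2.1 i).le) fun i => ((p s₀).2.1 i).le)

theorem isCompact_setOf_isFGCertificate (p : ι → oS n) (s₀ : ι) :
    IsCompact {x : (ι → Fin n → ℝ) × (ι → ℝ) |
      IsFGCertificate p x.1 x.2 ∧ x.2 s₀ = 1} := by
  have hclosed : IsClosed {x : (ι → Fin n → ℝ) × (ι → ℝ) | IsFGCertificate p x.1 x.2} := by
    simp only [IsFGCertificate, Set.ofPred_and, Set.ofPred_forall]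
    refine .inter (isClosed_iInter fun s => ?_) (.inter
      (isClosed_iInter fun s => isClosed_iInter fun s' => ?_)
      (isClosed_iInter fun s => isClosed_iInter fun s' => isClosed_iInter fun _ => ?_))
    · exact (isClosed_stdSimplex ℝ (Fin n)).preimage (by fun_prop)
    · exact isClosed_le (by fun_prop) (((continuous_apply s).comp continuous_snd).mul
        ((continuous_growth _ _).comp ((continuous_apply s).comp continuous_fst)))
    · exact isClosed_eq (by fun_prop) (by fun_prop)
  refine IsCompact.of_isClosed_subset
    ((isCompact_univ_pi fun _ => isCompact_stdSimplex ℝ (Fin n)).prod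
      (isCompact_Icc (a := 0)
        (b := fun s => ∑ i, (p s : Fin n → ℝ) i / (p s₀ : Fin n → ℝ) i)))
    (hclosed.inter (isClosed_eq (by fun_prop) continuous_const)) ?_
  rintro ⟨w, c⟩ ⟨h, hs₀ : c s₀ = 1⟩
  refine ⟨fun s _ => h.1 s, fun s => (h.pos hs₀ s).le, fun s => ?_⟩
  calc c s ≤ c s₀ * growth (w s₀) (p s₀) (p s) := h.2.1 s₀ s
    _ ≤ _ := by
      rw [hs₀, one_mul]
      exact growth_le_sum_div (h.1 s₀) (fun i => ((p s₀).2.1 i).le)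
        fun i => ((p s).2.1 i).le

theorem IsFGCertificate.exists_isFG [Fintype ι] [Nonempty ι] (h : IsFGCertificate p w c)
    (hc : ∀ s, 0 < c s) : ∃ π : oS n → cS n, IsFG π ∧ ∀ s, (π (p s) : Fin n → ℝ) = w s := by
  obtain ⟨hw, hcw, hwp⟩ := h
  set L : ι → (Fin n → ℝ) → ℝ := fun s q => c s * growth (w s) (p s) q
  have hLpos : ∀ s, ∀ q ∈ oS n, 0 < L s q := fun s q hq =>
    mul_pos (hc s) (growth_pos (hw s) (p s).2.1 hq.1)
  -- At a certificate point `p s₁` the minimum of the `L s` is attained at `s₁` itself.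
  have hsel : ∀ q : oS n, ∃ s₀, (∀ s, L s₀ q ≤ L s q) ∧ ∀ s, p s = q → p s₀ = q := by
    intro q
    by_cases hq : ∃ s, p s = q
    · obtain ⟨s₁, rfl⟩ := hq
      refine ⟨s₁, fun s => ?_, fun _ _ => rfl⟩
      simpa only [L, growth_self (hw s₁) fun i => ((p s₁).2.1 i).ne', mul_one] using hcw s s₁
    · obtain ⟨s₀, -, hmin⟩ :=
        Finset.exists_min_image Finset.univ (L · q) Finset.univ_nonempty
      exact ⟨s₀, fun s => hmin s (Finset.mem_univ s), fun s hs => absurd ⟨s, hs⟩ hq⟩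
  choose sel hsel_min hsel_eq using hsel
  let π : oS n → cS n := fun q =>
    ⟨drift (w (sel q)) (p (sel q)) q, drift_mem_cS (hw _) (p (sel q)).2.1 q.2.1⟩
  let Φ : (Fin n → ℝ) → ℝ := fun q => Finset.univ.inf' Finset.univ_nonempty (L · q)
  refine ⟨π, ⟨Φ, fun q hq => (Finset.lt_inf'_iff _).2 fun s _ => hLpos s q hq,
    concaveOn_finset_inf' _ convex_oS fun s _ => concaveOn_growth _ _ _, fun q q' => ?_⟩,
    fun s => ?_⟩
  · have hΦq : Φ q = L (sel q) q :=
      le_antisymm (Finset.inf'_le _ (Finset.mem_univ _))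
        (Finset.le_inf' _ _ fun s _ => hsel_min q s)
    calc Φ q' / Φ q ≤ L (sel q) q' / L (sel q) q := by
          rw [hΦq]
          exact div_le_div_of_nonneg_right (Finset.inf'_le _ (Finset.mem_univ _))
            (hLpos _ q q.2).le
      _ = growth (π q : Fin n → ℝ) (q : Fin n → ℝ) (q' : Fin n → ℝ) := by
          rw [growth_drift fun i => (q.2.1 i).ne', mul_div_mul_left _ _ (hc _).ne']
  · have hp : p (sel (p s)) = p s := hsel_eq _ s rfl
    change drift (w (sel (p s))) (p (sel (p s))) (p s) = w s
    rw [hp, hwp _ _ hp, drift_self (hw s) fun i => ((p s).2.1 i).ne']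

theorem exists_isFG_forall_le [Fintype ι] [Nonempty ι] (p : ι → oS n)
    {F : (ι → Fin n → ℝ) → ℝ} (hF : Continuous F) :
    ∃ π : oS n → cS n, IsFG π ∧
      ∀ η : oS n → cS n, IsFG η → F (fun s => η (p s)) ≤ F (fun s => π (p s)) := by
  obtain ⟨s₀⟩ := ‹Nonempty ι›
  obtain ⟨⟨w, c⟩, ⟨hwc, hc₀⟩, hmax⟩ := (isCompact_setOf_isFGCertificate p s₀).exists_isMaxOn
    ⟨((fun s => (p s : Fin n → ℝ)), 1), isFGCertificate_market p, rfl⟩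
    (hF.comp continuous_fst).continuousOn
  obtain ⟨π, hπ, hπp⟩ := hwc.exists_isFG (hwc.pos hc₀)
  refine ⟨π, hπ, fun η hη => ?_⟩
  obtain ⟨c', hc', hc'pos⟩ := hη.isFGCertificate p
  have hmem : ((fun s => (η (p s) : Fin n → ℝ)), (c' s₀)⁻¹ • c') ∈
      {x : (ι → Fin n → ℝ) × (ι → ℝ) | IsFGCertificate p x.1 x.2 ∧ x.2 s₀ = 1} :=
    ⟨hc'.smul (inv_nonneg.2 (hc'pos s₀).le), inv_mul_cancel₀ (hc'pos s₀).ne'⟩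
  rw [show (fun s => (π (p s) : Fin n → ℝ)) = w from funext hπp]
  exact hmax hmem

theorem relV_eq_prod (μ w : ℕ → Fin n → ℝ) (t : ℕ) :
    relV μ w t = ∏ s ∈ Finset.range t, growth (w s) (μ s) (μ (s + 1)) := by
  induction t with
  | zero => rfl
  | succ t ih => rw [relV, ih, Finset.prod_range_succ, growth]

theorem pV_eq_prod (μ : ℕ → oS n) (π : oS n → cS n) (t : ℕ) :
    pV μ π t =
      ∏ s : Fin t, growth (π (μ s) : Fin n → ℝ) (μ s : Fin n → ℝ) (μ (s + 1) : Fin n → ℝ) := by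
  rw [pV, relV_eq_prod, Fin.prod_univ_eq_prod_range
    (fun s => growth (π (μ s) : Fin n → ℝ) (μ s : Fin n → ℝ) (μ (s + 1) : Fin n → ℝ))]

end

theorem stmt17_general {n : ℕ} (μ : ℕ → ↥(oS n)) :
    ∀ t : ℕ, ∃ π : ↥(oS n) → ↥(cS n), IsFG π ∧
      ∀ η : ↥(oS n) → ↥(cS n), IsFG η → pV μ η t ≤ pV μ π t := by
  intro t
  obtain ⟨π, hπ, hmax⟩ := exists_isFG_forall_le (fun s : Fin (t + 1) => μ s)
    (F := fun w =>
      ∏ s : Fin t, growth (w s.castSucc) (μ s : Fin n → ℝ) (μ (s + 1) : Fin n → ℝ))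
    (continuous_finsetProd _ fun s _ => (continuous_growth _ _).comp (continuous_apply _))
  refine ⟨π, hπ, fun η hη => ?_⟩
  simpa only [pV_eq_prod, Fin.val_castSucc] using hmax η hη

/-- Lemma 4.7: the supremum of `V_π(t)` over the family of functionally
generated portfolios is attained. -/
theorem stmt17 {n : ℕ} (hn : 2 ≤ n) (M : ℝ) (hM : 0 < M)
    (μ : ℕ → ↥(oS n)) (hAM : AssumptionM M μ) :
    ∀ t : ℕ, ∃ π : ↥(oS n) → ↥(cS n), IsFG π ∧
      ∀ η : ↥(oS n) → ↥(cS n), IsFG η → pV μ η t ≤ pV μ π t :=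
  stmt17_general μ
end
end

section
/- Suppose the market weight sequence {μ(t)} ⊂ Δ_n satisfies Assumption (M) with constant M, and the empirical measures ℙ_t converge weakly to a Borel probability measure ℙ on S = {(p,q) ∈ Δ_n × Δ_n : 1/M ≤ q_i/p_i ≤ M for all i} that is absolutely continuous with respect to Lebesgue measure. Then for every functionally generated portfolio π ∈ FG the asymptotic growth rate exists and W(π) = lim_{t→∞} (1/t) log V_π(t) = lim_{t→∞} ∫_S ℓ_π dℙ_t = ∫_S ℓ_π dℙ. -/
/-!
If `Φ` generates `π`, the defining inequality at the point `p + c • (q - p)` reads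
`Φ (p + c • (q - p)) ≤ Φ p * (1 + c * (r - 1))`, where `r = π(p)·(q/p)` is the one-period return.
So `1 + (Φ (p + c • (q - p)) - Φ p) / (c * Φ p)` is at most `r` for `c > 0` and at least `r` for
`c < 0`. These quotients are continuous in `(p, q)`, and wherever `Φ` is differentiable at `p`
both converge to `r` as `c → 0`. By Rademacher's theorem a concave function is differentiable off
a Lebesgue-null set; read through an affine chart of the simplex, the pairs `(p, q) ∈ S` over that
set have zero `(2n-2)`-dimensional Hausdorff measure, hence zero `ℙ`-measure. Thus `ℓ_π` is
squeezed between bounded continuous functions converging to it `ℙ`-a.e., and the weak convergence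
of `ℙ_t` passes to `ℓ_π`. Finally `(1/t) log V_π(t) = ∫ ℓ_π dℙ_t` because `log V_π(t)` is the sum
of the log-returns.
-/

open MeasureTheory Filter Topology Finset
open scoped UniformConvergence ENNReal

noncomputable section

/-- The compact set `S = {(p,q) ∈ Δₙ × Δₙ : 1/M ≤ qᵢ/pᵢ ≤ M ∀ i}`. -/
def Sset (n : ℕ) (M : ℝ) : Set ((Fin n → ℝ) × (Fin n → ℝ)) :=
  {pq | pq.1 ∈ oS n ∧ pq.2 ∈ oS n ∧ ∀ i, 1 / M ≤ pq.2 i / pq.1 i ∧ pq.2 i / pq.1 i ≤ M}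

/-- The function `ℓ_π(p,q) = log(π(p)·(q/p))`, viewed as a function on `S`. -/
def lS {n : ℕ} {M : ℝ} (π : ↥(oS n) → ↥(cS n)) (x : ↥(Sset n M)) : ℝ :=
  Real.log (∑ i, (π ⟨x.1.1, x.2.1⟩ : Fin n → ℝ) i * (x.1.2 i / x.1.1 i))

/-- The empirical measure `ℙ_t = (1/t) Σ_{s<t} δ_{(μ(s),μ(s+1))}` as a measure on `S`. -/
def empS {n : ℕ} {M : ℝ} (μ : ℕ → ↥(oS n))
    (hS : ∀ s : ℕ, ((μ s : Fin n → ℝ), (μ (s + 1) : Fin n → ℝ)) ∈ Sset n M) (t : ℕ) :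
    Measure ↥(Sset n M) :=
  (t : ℝ≥0∞)⁻¹ • ∑ s ∈ Finset.range t,
    Measure.dirac (⟨((μ s : Fin n → ℝ), (μ (s + 1) : Fin n → ℝ)), hS s⟩ : ↥(Sset n M))

section EmpiricalMean

open scoped BoundedContinuousFunction

variable {X : Type*}

def empiricalMean (x : ℕ → X) (f : X → ℝ) (t : ℕ) : ℝ := (∑ s ∈ range t, f (x s)) / t

lemma empiricalMean_mono (x : ℕ → X) {f g : X → ℝ} (hfg : ∀ y, f y ≤ g y) (t : ℕ) :
    empiricalMean x f t ≤ empiricalMean x g t :=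
  div_le_div_of_nonneg_right (sum_le_sum fun s _ => hfg (x s)) t.cast_nonneg

lemma integral_smul_sum_dirac [MeasurableSpace X] [MeasurableSingletonClass X] (x : ℕ → X)
    (f : X → ℝ) (t : ℕ) :
    ∫ y, f y ∂((t : ℝ≥0∞)⁻¹ • ∑ s ∈ range t, Measure.dirac (x s)) = empiricalMean x f t := by
  have hint : ∀ s, Integrable f (Measure.dirac (x s)) := fun s =>
    ⟨(aestronglyMeasurable_const (b := f (x s))).congr (ae_eq_dirac f).symm,
      by simp [HasFiniteIntegral, lintegral_dirac]⟩
  rw [integral_smul_measure, integral_finsetSum_measure fun s _ => hint s]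
  simp only [integral_dirac, ENNReal.toReal_inv, ENNReal.toReal_natCast, smul_eq_mul,
    inv_mul_eq_div, empiricalMean]

/-- A bounded function squeezed between continuous functions that converge to it almost
everywhere is a continuity function for the weak convergence of empirical means. -/
theorem tendsto_empiricalMean_of_squeeze [TopologicalSpace X] [MeasurableSpace X]
    [OpensMeasurableSpace X] {P : Measure X} [IsFiniteMeasure P] {x : ℕ → X}
    (hweak : ∀ f : X →ᵇ ℝ, Tendsto (empiricalMean x f) atTop (𝓝 (∫ y, f y ∂P)))
    {f : X → ℝ} {g h : ℕ → X → ℝ} {C : ℝ}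
    (hg : ∀ k, Continuous (g k)) (hh : ∀ k, Continuous (h k))
    (hg_bdd : ∀ k y, ‖g k y‖ ≤ C) (hh_bdd : ∀ k y, ‖h k y‖ ≤ C)
    (hgf : ∀ k y, g k y ≤ f y) (hfh : ∀ k y, f y ≤ h k y)
    (hg_lim : ∀ᵐ y ∂P, Tendsto (g · y) atTop (𝓝 (f y)))
    (hh_lim : ∀ᵐ y ∂P, Tendsto (h · y) atTop (𝓝 (f y))) :
    Tendsto (empiricalMean x f) atTop (𝓝 (∫ y, f y ∂P)) := by
  have hg_int : Tendsto (fun k => ∫ y, g k y ∂P) atTop (𝓝 (∫ y, f y ∂P)) :=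
    tendsto_integral_of_dominated_convergence (fun _ => C) (fun k => (hg k).aestronglyMeasurable)
      (integrable_const C) (fun k => ae_of_all _ (hg_bdd k)) hg_lim
  have hh_int : Tendsto (fun k => ∫ y, h k y ∂P) atTop (𝓝 (∫ y, f y ∂P)) :=
    tendsto_integral_of_dominated_convergence (fun _ => C) (fun k => (hh k).aestronglyMeasurable)
      (integrable_const C) (fun k => ae_of_all _ (hh_bdd k)) hh_lim
  refine tendsto_order.2 ⟨fun a ha => ?_, fun b hb => ?_⟩
  · obtain ⟨k, hk⟩ := (hg_int.eventually (lt_mem_nhds ha)).exists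
    filter_upwards [(hweak (.ofNormedAddCommGroup _ (hg k) C (hg_bdd k))).eventually
      (lt_mem_nhds hk)] with t ht
    exact ht.trans_le (empiricalMean_mono x (hgf k) t)
  · obtain ⟨k, hk⟩ := (hh_int.eventually (gt_mem_nhds hb)).exists
    filter_upwards [(hweak (.ofNormedAddCommGroup _ (hh k) C (hh_bdd k))).eventually
      (gt_mem_nhds hk)] with t ht
    exact (empiricalMean_mono x (hfh k) t).trans_lt ht

end EmpiricalMean

theorem LocallyLipschitzOn.ae_differentiableAt {E F : Type*} [NormedAddCommGroup E]
    [NormedSpace ℝ E] [FiniteDimensional ℝ E] [MeasurableSpace E] [BorelSpace E]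
    {μ : Measure E} [μ.IsAddHaarMeasure] [NormedAddCommGroup F] [NormedSpace ℝ F]
    [FiniteDimensional ℝ F] {f : E → F} {U : Set E} (hU : IsOpen U)
    (hf : LocallyLipschitzOn U f) :
    ∀ᵐ x ∂μ, x ∈ U → DifferentiableAt ℝ f x := by
  rw [ae_iff]
  refine measure_null_of_locally_null _ fun x hx => ?_
  obtain ⟨hxU, -⟩ := Classical.not_imp.1 hx
  obtain ⟨K, t, ht, hlip⟩ := hf hxU
  rw [hU.nhdsWithin_eq hxU] at ht
  refine ⟨_, inter_mem_nhdsWithin _ (interior_mem_nhds.2 ht), ?_⟩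
  refine measure_mono_null (fun y hy => ?_) (ae_iff.1 hlip.ae_differentiableWithinAt_of_mem)
  obtain ⟨-, hnd⟩ := Classical.not_imp.1 hy.1
  exact fun hdiff => hnd
    ((hdiff (interior_subset hy.2)).differentiableAt (mem_interior_iff_mem_nhds.1 hy.2))

theorem AffineMap.exists_lipschitzWith {E F : Type*} [NormedAddCommGroup E] [NormedSpace ℝ E]
    [FiniteDimensional ℝ E] [NormedAddCommGroup F] [NormedSpace ℝ F] (f : E →ᵃ[ℝ] F) :
    ∃ K, LipschitzWith K f := by
  let L := LinearMap.toContinuousLinearMap f.linear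
  refine ⟨‖L‖₊, LipschitzWith.of_dist_le_mul fun x y => ?_⟩
  rw [dist_eq_norm_sub, dist_eq_norm_sub, ← vsub_eq_sub, ← vsub_eq_sub, ← f.linearMap_vsub]
  exact L.le_opNorm _

theorem LipschitzWith.hausdorffMeasure_image_null {ι Y : Type*} [Fintype ι] [EMetricSpace Y]
    [MeasurableSpace Y] [BorelSpace Y] {K : NNReal} {f : (ι → ℝ) → Y} (hf : LipschitzWith K f)
    {s : Set (ι → ℝ)} (hs : volume s = 0) : μH[Fintype.card ι] (f '' s) = 0 := by
  have := hf.hausdorffMeasure_image_le (Nat.cast_nonneg (Fintype.card ι)) s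
  rw [hausdorffMeasure_pi_real, hs, mul_zero] at this
  exact le_antisymm this bot_le

theorem volume_setOf_comp_inl_mem_null {ι ι' : Type*} [Fintype ι] [Fintype ι']
    {N : Set (ι → ℝ)} (hN : volume N = 0) :
    volume {z : ι ⊕ ι' → ℝ | z ∘ Sum.inl ∈ N} = 0 := by
  have hpre : {z : ι ⊕ ι' → ℝ | z ∘ Sum.inl ∈ N} =
      MeasurableEquiv.sumPiEquivProdPi (fun _ => ℝ) ⁻¹' N ×ˢ Set.univ := by
    ext z
    simp [MeasurableEquiv.sumPiEquivProdPi, Equiv.sumPiEquivProdPi, Function.comp_def]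
  rw [hpre, (volume_measurePreserving_sumPiEquivProdPi _).measure_preimage_equiv,
    Measure.volume_eq_prod, Measure.prod_prod, hN, zero_mul]

lemma oS_zero : oS 0 = ∅ := by
  ext p
  simp [oS]

section SimplexChart

variable {m : ℕ}

variable (m) in
def simplexChart : (Fin m → ℝ) →ᵃ[ℝ] (Fin (m + 1) → ℝ) where
  toFun x := Fin.snoc x (1 - ∑ j, x j)
  linear :=
    { toFun := fun v => Fin.snoc v (-∑ j, v j)
      map_add' := fun v w => by
        ext i
        refine Fin.lastCases ?_ (fun j => ?_) i <;> simp [sum_add_distrib]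
        ring
      map_smul' := fun c v => by
        ext i
        refine Fin.lastCases ?_ (fun j => ?_) i <;> simp [mul_sum] }
  map_vadd' x v := by
    ext i
    refine Fin.lastCases ?_ (fun j => ?_) i <;> simp [sum_add_distrib]
    ring

lemma simplexChart_apply (x : Fin m → ℝ) :
    simplexChart m x = Fin.snoc x (1 - ∑ j, x j) := rfl

lemma sum_simplexChart (x : Fin m → ℝ) : ∑ i, simplexChart m x i = 1 := by
  simp [simplexChart_apply, Fin.sum_univ_castSucc]

lemma simplexChart_init {p : Fin (m + 1) → ℝ} (hp : ∑ i, p i = 1) :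
    simplexChart m (Fin.init p) = p := by
  rw [Fin.sum_univ_castSucc] at hp
  conv_rhs => rw [← Fin.snoc_init_self p]
  rw [simplexChart_apply]
  congr 1
  simp only [Fin.init]
  linarith

lemma isOpen_simplexChart_preimage_oS : IsOpen (simplexChart m ⁻¹' oS (m + 1)) := by
  have hpre : simplexChart m ⁻¹' oS (m + 1) =
      simplexChart m ⁻¹' Set.univ.pi fun _ => Set.Ioi 0 := by
    ext x
    simp [oS, sum_simplexChart]
  rw [hpre]
  exact (isOpen_set_pi Set.finite_univ fun _ _ => isOpen_Ioi).preimage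
    (simplexChart m).continuous_of_finiteDimensional

lemma differentiableAt_segment_of_chart {Φ : (Fin (m + 1) → ℝ) → ℝ} {p q : Fin (m + 1) → ℝ}
    (hp : ∑ i, p i = 1) (hq : ∑ i, q i = 1)
    (hd : DifferentiableAt ℝ (Φ ∘ simplexChart m) (Fin.init p)) :
    DifferentiableAt ℝ (fun c : ℝ => Φ (p + c • (q - p))) 0 := by
  have hline : (fun c : ℝ => Φ (p + c • (q - p))) =
      (Φ ∘ simplexChart m) ∘ fun c : ℝ => Fin.init p + c • Fin.init (q - p) := by
    funext c
    have hs : ∑ i, (p + c • (q - p)) i = 1 := by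
      simp [sum_add_distrib, ← mul_sum, hp, hq]
    rw [← simplexChart_init hs]
    rfl
  rw [hline]
  exact DifferentiableAt.comp _ (by simpa using hd) (by fun_prop)

variable (m) in
def pairChart : (Fin m ⊕ Fin m → ℝ) →ᵃ[ℝ] (Fin (m + 1) → ℝ) × (Fin (m + 1) → ℝ) :=
  ((simplexChart m).comp (LinearMap.funLeft ℝ ℝ Sum.inl).toAffineMap).prod
    ((simplexChart m).comp (LinearMap.funLeft ℝ ℝ Sum.inr).toAffineMap)

lemma pairChart_apply (z : Fin m ⊕ Fin m → ℝ) :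
    pairChart m z = (simplexChart m (z ∘ Sum.inl), simplexChart m (z ∘ Sum.inr)) := rfl

end SimplexChart

lemma ConcaveOn.continuousOn_oS {n : ℕ} {Φ : (Fin n → ℝ) → ℝ} (hΦ : ConcaveOn ℝ (oS n) Φ) :
    ContinuousOn Φ (oS n) := by
  cases n with
  | zero => simp [oS_zero]
  | succ m =>
    have hG := (hΦ.comp_affineMap (simplexChart m)).continuousOn isOpen_simplexChart_preimage_oS
    have hinit : Continuous (Fin.init : (Fin (m + 1) → ℝ) → Fin m → ℝ) :=
      continuous_pi fun i => continuous_apply _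
    refine (hG.comp hinit.continuousOn fun p hp => ?_).congr fun p hp => ?_
    · simp [simplexChart_init hp.2, hp]
    · simp [simplexChart_init hp.2]

theorem ae_differentiableAt_segment {n : ℕ} {M : ℝ} {P : Measure (Sset n M)}
    (habs : P.map Subtype.val ≪ μH[2 * (n : ℝ) - 2]) {Φ : (Fin n → ℝ) → ℝ}
    (hΦ : ConcaveOn ℝ (oS n) Φ) :
    ∀ᵐ y ∂P, DifferentiableAt ℝ (fun c : ℝ => Φ (y.1.1 + c • (y.1.2 - y.1.1))) 0 := by
  rcases n with _ | m
  · exact ae_of_all _ fun y => absurd y.2.1 (by simp [oS_zero])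
  set N := {a | ¬(a ∈ simplexChart m ⁻¹' oS (m + 1) → DifferentiableAt ℝ (Φ ∘ simplexChart m) a)}
  have hN : volume N = 0 := ae_iff.1 <|
    ((hΦ.comp_affineMap _).locallyLipschitzOn isOpen_simplexChart_preimage_oS).ae_differentiableAt
      isOpen_simplexChart_preimage_oS
  set T := pairChart m '' {z | z ∘ Sum.inl ∈ N}
  have hT : μH[2 * ((m + 1 : ℕ) : ℝ) - 2] T = 0 := by
    obtain ⟨K, hK⟩ := (pairChart m).exists_lipschitzWith
    convert hK.hausdorffMeasure_image_null (volume_setOf_comp_inl_mem_null hN) using 3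
    simp only [Fintype.card_sum, Fintype.card_fin]
    push_cast
    ring
  have hPT : P (Subtype.val ⁻¹' T) = 0 :=
    le_antisymm ((Measure.le_map_apply measurable_subtype_coe.aemeasurable _).trans_eq (habs hT))
      bot_le
  refine ae_iff.2 (measure_mono_null (fun y hy => ?_) hPT)
  have hp := y.2.1
  have hq := y.2.2.1
  refine ⟨Sum.elim (Fin.init y.1.1) (Fin.init y.1.2), ?_, ?_⟩
  · show ¬(simplexChart m (Fin.init y.1.1) ∈ oS (m + 1) → _)
    rw [simplexChart_init hp.2]
    exact fun h => hy (differentiableAt_segment_of_chart hp.2 hq.2 (h hp))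
  · simp [pairChart_apply, simplexChart_init hp.2, simplexChart_init hq.2]

/-- The lower difference quotients may be nonpositive, where `Real.log` takes junk values;
clamping to `[M⁻¹, M]`, the range of the returns on `S`, avoids them and keeps `log` bounded. -/
def clampLog (M r : ℝ) : ℝ := Real.log (max M⁻¹ (min M r))

section ClampLog

variable {M : ℝ}

lemma clampLog_mono (hM : 0 < M) : Monotone (clampLog M) := fun _ _ h =>
  Real.log_le_log (lt_max_of_lt_left (inv_pos.2 hM)) (max_le_max le_rfl (min_le_min le_rfl h))

lemma continuous_clampLog (hM : 0 < M) : Continuous (clampLog M) :=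
  (continuous_const.max (continuous_const.min continuous_id)).log fun _ =>
    (lt_max_of_lt_left (inv_pos.2 hM)).ne'

lemma abs_clampLog_le (hM : 1 ≤ M) (r : ℝ) : |clampLog M r| ≤ Real.log M := by
  have hM0 : 0 < M := one_pos.trans_le hM
  have hle : max M⁻¹ (min M r) ≤ M := max_le ((inv_le_one_of_one_le₀ hM).trans hM) (min_le_left _ _)
  have hge : M⁻¹ ≤ max M⁻¹ (min M r) := le_max_left _ _
  rw [abs_le, clampLog, ← Real.log_inv]
  exact ⟨Real.log_le_log (inv_pos.2 hM0) hge, Real.log_le_log ((inv_pos.2 hM0).trans_le hge) hle⟩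

lemma clampLog_of_mem {r : ℝ} (hr : r ∈ Set.Icc M⁻¹ M) : clampLog M r = Real.log r := by
  rw [clampLog, min_eq_right hr.2, max_eq_right hr.1]

end ClampLog

section Portfolio

variable {n : ℕ} {M : ℝ}

def relReturn (π : oS n → cS n) (p : oS n) (q : Fin n → ℝ) : ℝ :=
  ∑ i, (π p : Fin n → ℝ) i * (q i / (p : Fin n → ℝ) i)

lemma sum_mul_mem_Icc {ι : Type*} [Fintype ι] {w r : ι → ℝ} {a b : ℝ} (hw0 : ∀ i, 0 ≤ w i)
    (hw1 : ∑ i, w i = 1) (hr : ∀ i, r i ∈ Set.Icc a b) : ∑ i, w i * r i ∈ Set.Icc a b := by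
  constructor
  · calc a = ∑ i, w i * a := by rw [← sum_mul, hw1, one_mul]
      _ ≤ ∑ i, w i * r i := sum_le_sum fun i _ => mul_le_mul_of_nonneg_left (hr i).1 (hw0 i)
  · calc ∑ i, w i * r i ≤ ∑ i, w i * b :=
          sum_le_sum fun i _ => mul_le_mul_of_nonneg_left (hr i).2 (hw0 i)
      _ = b := by rw [← sum_mul, hw1, one_mul]

lemma le_mul_of_mem_Sset {p q : Fin n → ℝ} (h : (p, q) ∈ Sset n M) (i : Fin n) : q i ≤ M * p i :=
  (div_le_iff₀ (h.1.1 i)).1 (h.2.2 i).2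

lemma one_le_of_mem_Sset {p q : Fin n → ℝ} (h : (p, q) ∈ Sset n M) : 1 ≤ M :=
  calc 1 = ∑ i, q i := h.2.1.2.symm
    _ ≤ ∑ i, M * p i := sum_le_sum fun i _ => le_mul_of_mem_Sset h i
    _ = M := by rw [← mul_sum, h.1.2, mul_one]

lemma relReturn_mem_Icc (π : oS n → cS n) {p q : Fin n → ℝ} (h : (p, q) ∈ Sset n M) :
    relReturn π ⟨p, h.1⟩ q ∈ Set.Icc M⁻¹ M := by
  simpa only [relReturn, one_div] using sum_mul_mem_Icc (π _).2.1 (π _).2.2 fun i => h.2.2 i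

lemma relReturn_pos (π : oS n → cS n) {p q : Fin n → ℝ} (h : (p, q) ∈ Sset n M) :
    0 < relReturn π ⟨p, h.1⟩ q :=
  (inv_pos.2 (one_pos.trans_le (one_le_of_mem_Sset h))).trans_le (relReturn_mem_Icc π h).1

lemma lS_eq_clampLog (π : oS n → cS n) (y : Sset n M) :
    lS π y = clampLog M (relReturn π ⟨y.1.1, y.2.1⟩ y.1.2) :=
  (clampLog_of_mem (relReturn_mem_Icc π y.2)).symm

lemma add_smul_sub_mem_oS {p q : Fin n → ℝ} (h : (p, q) ∈ Sset n M) {c : ℝ} (hc : |c| * M < 1) :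
    p + c • (q - p) ∈ oS n := by
  have hM := one_le_of_mem_Sset h
  refine ⟨fun i => ?_, ?_⟩
  · have hp : 0 < p i := h.1.1 i
    have hq : 0 < q i := h.2.1.1 i
    have hqp := le_mul_of_mem_Sset h i
    simp only [Pi.add_apply, Pi.smul_apply, Pi.sub_apply, smul_eq_mul]
    rcases le_or_gt 0 c with hc0 | hc0
    · rw [abs_of_nonneg hc0] at hc
      nlinarith [mul_nonneg hc0 hq.le]
    · rw [abs_of_neg hc0] at hc
      nlinarith [mul_le_mul_of_nonpos_left hqp hc0.le]
  · simp [sum_add_distrib, ← mul_sum, h.1.2, h.2.1.2]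

lemma relReturn_add_smul_sub (π : oS n → cS n) (p : oS n) (q : Fin n → ℝ) (c : ℝ) :
    relReturn π p (p + c • (q - p)) = 1 + c * (relReturn π p q - 1) := by
  have hterm : ∀ i, (π p : Fin n → ℝ) i * (((p : Fin n → ℝ) + c • (q - p)) i / (p : Fin n → ℝ) i)
      = (π p : Fin n → ℝ) i + c * ((π p : Fin n → ℝ) i * (q i / (p : Fin n → ℝ) i))
        - c * (π p : Fin n → ℝ) i := by
    intro i
    have := (p.2.1 i).ne'
    simp only [Pi.add_apply, Pi.smul_apply, Pi.sub_apply, smul_eq_mul]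
    field_simp
    ring
  simp only [relReturn, hterm, sum_sub_distrib, sum_add_distrib, ← mul_sum, (π p).2.2]
  ring

variable {π : oS n → cS n} {Φ : (Fin n → ℝ) → ℝ}

lemma apply_add_smul_sub_le (hΦ : ∀ p ∈ oS n, 0 < Φ p)
    (hfg : ∀ p q : oS n, Φ q / Φ p ≤ relReturn π p q) (p : oS n) (q : Fin n → ℝ) {c : ℝ}
    (hmem : (p : Fin n → ℝ) + c • (q - p) ∈ oS n) :
    Φ (p + c • (q - p)) ≤ Φ p * (1 + c * (relReturn π p q - 1)) := by
  have := hfg p ⟨_, hmem⟩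
  rwa [relReturn_add_smul_sub, div_le_iff₀ (hΦ p p.2), mul_comm] at this

def slopeRatio (Φ : (Fin n → ℝ) → ℝ) (p q : Fin n → ℝ) (c : ℝ) : ℝ :=
  1 + (Φ (p + c • (q - p)) - Φ p) / (c * Φ p)

lemma mul_slopeRatio_le (hΦ : ∀ p ∈ oS n, 0 < Φ p)
    (hfg : ∀ p q : oS n, Φ q / Φ p ≤ relReturn π p q) (p : oS n) (q : Fin n → ℝ) {c : ℝ}
    (hc : c ≠ 0) (hmem : (p : Fin n → ℝ) + c • (q - p) ∈ oS n) :
    c * slopeRatio Φ p q c ≤ c * relReturn π p q := by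
  have hΦp := hΦ p p.2
  have hle := apply_add_smul_sub_le hΦ hfg p q hmem
  calc c * slopeRatio Φ p q c = c + (Φ (p + c • (q - p)) - Φ p) / Φ p := by
        rw [slopeRatio]
        field_simp
    _ ≤ c + c * (relReturn π p q - 1) := by
        gcongr
        rw [div_le_iff₀ hΦp]
        linarith
    _ = c * relReturn π p q := by ring

lemma slopeRatio_le_relReturn (hΦ : ∀ p ∈ oS n, 0 < Φ p)
    (hfg : ∀ p q : oS n, Φ q / Φ p ≤ relReturn π p q) {p q : Fin n → ℝ} (h : (p, q) ∈ Sset n M)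
    {c : ℝ} (hc0 : 0 < c) (hc : |c| * M < 1) :
    slopeRatio Φ p q c ≤ relReturn π ⟨p, h.1⟩ q :=
  le_of_mul_le_mul_left
    (mul_slopeRatio_le hΦ hfg ⟨p, h.1⟩ q hc0.ne' (add_smul_sub_mem_oS h hc)) hc0

lemma relReturn_le_slopeRatio (hΦ : ∀ p ∈ oS n, 0 < Φ p)
    (hfg : ∀ p q : oS n, Φ q / Φ p ≤ relReturn π p q) {p q : Fin n → ℝ} (h : (p, q) ∈ Sset n M)
    {c : ℝ} (hc0 : c < 0) (hc : |c| * M < 1) :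
    relReturn π ⟨p, h.1⟩ q ≤ slopeRatio Φ p q c :=
  (mul_le_mul_left_of_neg hc0).1
    (mul_slopeRatio_le hΦ hfg ⟨p, h.1⟩ q hc0.ne (add_smul_sub_mem_oS h hc))

lemma continuous_slopeRatio (hΦ : ∀ p ∈ oS n, 0 < Φ p) (hΦc : ContinuousOn Φ (oS n)) {c : ℝ}
    (hc0 : c ≠ 0) (hc : |c| * M < 1) :
    Continuous fun x : Sset n M => slopeRatio Φ x.1.1 x.1.2 c := by
  have hp : Continuous fun x : Sset n M => Φ x.1.1 :=
    hΦc.comp_continuous (by fun_prop) fun x => x.2.1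
  have hpq : Continuous fun x : Sset n M => Φ (x.1.1 + c • (x.1.2 - x.1.1)) :=
    hΦc.comp_continuous (by fun_prop) fun x => add_smul_sub_mem_oS x.2 hc
  exact continuous_const.add ((hpq.sub hp).div (continuous_const.mul hp)
    fun x => mul_ne_zero hc0 (hΦ _ x.2.1).ne')

lemma tendsto_slopeRatio (hΦ : ∀ p ∈ oS n, 0 < Φ p)
    (hfg : ∀ p q : oS n, Φ q / Φ p ≤ relReturn π p q) {p q : Fin n → ℝ} (h : (p, q) ∈ Sset n M)
    (hd : DifferentiableAt ℝ (fun c : ℝ => Φ (p + c • (q - p))) 0) :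
    Tendsto (slopeRatio Φ p q) (𝓝[≠] 0) (𝓝 (relReturn π ⟨p, h.1⟩ q)) := by
  have hΦp := hΦ p h.1
  have hL : Tendsto (slopeRatio Φ p q) (𝓝[≠] 0)
      (𝓝 (1 + deriv (fun c : ℝ => Φ (p + c • (q - p))) 0 / Φ p)) := by
    refine ((hasDerivAt_iff_tendsto_slope.1 hd.hasDerivAt).div_const _ |>.const_add 1).congr' ?_
    filter_upwards [self_mem_nhdsWithin] with c hc
    simp only [slopeRatio, slope_def_field, zero_smul, add_zero, sub_zero]
    field_simp
  have hsmall : ∀ᶠ c in 𝓝 (0 : ℝ), |c| * M < 1 := by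
    have : Tendsto (fun c : ℝ => |c| * M) (𝓝 0) (𝓝 0) := by
      simpa using (continuous_abs.mul continuous_const).tendsto (0 : ℝ) (f := fun c => |c| * M)
    exact this.eventually (gt_mem_nhds one_pos)
  have hupper : 1 + deriv (fun c : ℝ => Φ (p + c • (q - p))) 0 / Φ p ≤ relReturn π ⟨p, h.1⟩ q :=
    le_of_tendsto (hL.mono_left (nhdsWithin_mono _ fun c (hc : c ∈ Set.Ioi 0) => ne_of_gt hc))
      (by filter_upwards [self_mem_nhdsWithin, nhdsWithin_le_nhds hsmall] with c hc hcM
          exact slopeRatio_le_relReturn hΦ hfg h hc hcM)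
  have hlower : relReturn π ⟨p, h.1⟩ q ≤ 1 + deriv (fun c : ℝ => Φ (p + c • (q - p))) 0 / Φ p :=
    ge_of_tendsto (hL.mono_left (nhdsWithin_mono _ fun c (hc : c ∈ Set.Iio 0) => ne_of_lt hc))
      (by filter_upwards [self_mem_nhdsWithin, nhdsWithin_le_nhds hsmall] with c hc hcM
          exact relReturn_le_slopeRatio hΦ hfg h hc hcM)
  rwa [le_antisymm hupper hlower] at hL

lemma tendsto_clampLog_slopeRatio (hΦ : ∀ p ∈ oS n, 0 < Φ p) (hfg : ∀ p q : oS n, Φ q / Φ p ≤ relReturn π p q)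
    {y : Sset n M} (hd : DifferentiableAt ℝ (fun c : ℝ => Φ (y.1.1 + c • (y.1.2 - y.1.1))) 0)
    {c : ℕ → ℝ} (hc : Tendsto c atTop (𝓝[≠] 0)) :
    Tendsto (fun k => clampLog M (slopeRatio Φ y.1.1 y.1.2 (c k))) atTop (𝓝 (lS π y)) := by
  have hM0 : 0 < M := one_pos.trans_le (one_le_of_mem_Sset y.2)
  rw [lS_eq_clampLog]
  exact ((continuous_clampLog hM0).tendsto _).comp ((tendsto_slopeRatio hΦ hfg y.2 hd).comp hc)

theorem tendsto_empiricalMean_lS (hΦ : ∀ p ∈ oS n, 0 < Φ p) (hΦc : ContinuousOn Φ (oS n))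
    (hfg : ∀ p q : oS n, Φ q / Φ p ≤ relReturn π p q) {P : Measure (Sset n M)}
    [IsProbabilityMeasure P] {x : ℕ → Sset n M}
    (hweak : ∀ f : BoundedContinuousFunction (Sset n M) ℝ,
      Tendsto (empiricalMean x f) atTop (𝓝 (∫ y, f y ∂P)))
    (hdiff : ∀ᵐ y ∂P, DifferentiableAt ℝ (fun c : ℝ => Φ (y.1.1 + c • (y.1.2 - y.1.1))) 0) :
    Tendsto (empiricalMean x (lS π)) atTop (𝓝 (∫ y, lS π y ∂P)) := by
  have hM : 1 ≤ M := one_le_of_mem_Sset (x 0).2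
  have hM0 : 0 < M := one_pos.trans_le hM
  set t : ℕ → ℝ := fun k => (M * (k + 2))⁻¹
  have ht : ∀ k, 0 < t k := fun k => by positivity
  have ht_small : ∀ k, |t k| * M < 1 := fun k => by
    rw [abs_of_pos (ht k), inv_mul_lt_one₀ (by positivity)]
    nlinarith [k.cast_nonneg (α := ℝ)]
  have ht_small' : ∀ k, |-t k| * M < 1 := fun k => by simpa using ht_small k
  have ht_lim : Tendsto t atTop (𝓝 0) :=
    (tendsto_natCast_atTop_atTop.atTop_add tendsto_const_nhds
      |>.const_mul_atTop hM0).inv_tendsto_atTop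
  refine tendsto_empiricalMean_of_squeeze hweak (C := Real.log M)
    (g := fun k y => clampLog M (slopeRatio Φ y.1.1 y.1.2 (t k)))
    (h := fun k y => clampLog M (slopeRatio Φ y.1.1 y.1.2 (-t k)))
    (fun k => (continuous_clampLog hM0).comp
      (continuous_slopeRatio hΦ hΦc (ht k).ne' (ht_small k)))
    (fun k => (continuous_clampLog hM0).comp
      (continuous_slopeRatio hΦ hΦc (neg_ne_zero.2 (ht k).ne') (ht_small' k)))
    (fun k y => abs_clampLog_le hM _) (fun k y => abs_clampLog_le hM _)
    (fun k y => (lS_eq_clampLog π y).symm ▸ clampLog_mono hM0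
      (slopeRatio_le_relReturn hΦ hfg y.2 (ht k) (ht_small k)))
    (fun k y => (lS_eq_clampLog π y).symm ▸ clampLog_mono hM0
      (relReturn_le_slopeRatio hΦ hfg y.2 (neg_neg_of_pos (ht k)) (ht_small' k)))
    (hdiff.mono fun y hy => tendsto_clampLog_slopeRatio hΦ hfg hy <|
      tendsto_nhdsWithin_of_tendsto_nhds_of_eventually_within _ ht_lim
        (Eventually.of_forall fun k => (ht k).ne'))
    (hdiff.mono fun y hy => tendsto_clampLog_slopeRatio hΦ hfg hy <|
      tendsto_nhdsWithin_of_tendsto_nhds_of_eventually_within _ (by simpa using ht_lim.neg)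
        (Eventually.of_forall fun k => neg_ne_zero.2 (ht k).ne'))

end Portfolio

lemma pV_eq_prod_relReturn {n : ℕ} (μ : ℕ → oS n) (π : oS n → cS n) (t : ℕ) :
    pV μ π t = ∏ s ∈ range t, relReturn π (μ s) (μ (s + 1)) := by
  induction t with
  | zero => rfl
  | succ t ih => rw [prod_range_succ, ← ih]; rfl

theorem stmt19_general {n : ℕ} (M : ℝ)
    (μ : ℕ → ↥(oS n))
    (hS : ∀ s : ℕ, ((μ s : Fin n → ℝ), (μ (s + 1) : Fin n → ℝ)) ∈ Sset n M)
    (P : Measure ↥(Sset n M)) [IsProbabilityMeasure P]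
    (habs : P.map Subtype.val ≪ Measure.hausdorffMeasure (2 * (n : ℝ) - 2))
    (hweak : ∀ f : BoundedContinuousFunction ↥(Sset n M) ℝ,
      Tendsto (fun t : ℕ =>
          (∑ s ∈ Finset.range t,
            f ⟨((μ s : Fin n → ℝ), (μ (s + 1) : Fin n → ℝ)), hS s⟩) / t)
        atTop (𝓝 (∫ x, f x ∂P))) :
    ∀ π : ↥(oS n) → ↥(cS n), IsFG π →
      Tendsto (fun t : ℕ => Real.log (pV μ π t) / t) atTop (𝓝 (∫ x, lS π x ∂P)) ∧
      Tendsto (fun t : ℕ => ∫ x, lS π x ∂(empS μ hS t)) atTop (𝓝 (∫ x, lS π x ∂P)) := by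
  rintro π ⟨Φ, hΦpos, hΦconc, hfg⟩
  have hrate := tendsto_empiricalMean_lS hΦpos hΦconc.continuousOn_oS hfg hweak
    (ae_differentiableAt_segment habs hΦconc)
  refine ⟨hrate.congr fun t => ?_, hrate.congr fun t => (integral_smul_sum_dirac _ _ t).symm⟩
  rw [pV_eq_prod_relReturn, Real.log_prod fun s _ => (relReturn_pos π (hS s)).ne']
  rfl

/-- Lemma 4.8: under weak convergence of the empirical measures `ℙ_t` to an
absolutely continuous probability measure `ℙ` on `S`, the asymptotic growth rate of every
functionally generated portfolio exists and `W(π) = lim (1/t) log V_π(t)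
= lim ∫_S ℓ_π dℙ_t = ∫_S ℓ_π dℙ`. -/
theorem stmt19 {n : ℕ} (hn : 2 ≤ n) (M : ℝ) (hM : 0 < M)
    (μ : ℕ → ↥(oS n))
    (hS : ∀ s : ℕ, ((μ s : Fin n → ℝ), (μ (s + 1) : Fin n → ℝ)) ∈ Sset n M)
    (P : Measure ↥(Sset n M)) [IsProbabilityMeasure P]
    (habs : P.map Subtype.val ≪ Measure.hausdorffMeasure (2 * (n : ℝ) - 2))
    (hweak : ∀ f : BoundedContinuousFunction ↥(Sset n M) ℝ,
      Tendsto (fun t : ℕ =>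
          (∑ s ∈ Finset.range t,
            f ⟨((μ s : Fin n → ℝ), (μ (s + 1) : Fin n → ℝ)), hS s⟩) / t)
        atTop (𝓝 (∫ x, f x ∂P))) :
    ∀ π : ↥(oS n) → ↥(cS n), IsFG π →
      Tendsto (fun t : ℕ => Real.log (pV μ π t) / t) atTop (𝓝 (∫ x, lS π x ∂P)) ∧
      Tendsto (fun t : ℕ => ∫ x, lS π x ∂(empS μ hS t)) atTop (𝓝 (∫ x, lS π x ∂P)) :=
  stmt19_general M μ hS P habs hweak
end
end
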